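/- Let 0 = n_0 < n_1 < n_2 < ⋯ be a strictly increasing sequence of positive integers and let X^1, X^2, X^3, … be binary-valued stochastic processes on a common probability space that are mutually independent, where X^i = (X^i_n)_{n≥1} is n_i-order two-faced for each i. Define the process W = (W_n)_{n≥1} by W_i = X^1_i ⊕ X^2_i ⊕ … ⊕ X^m_i whenever n_{m−1} < i ≤ n_m (addition modulo 2). Then W is twice two-faced: for every integer k ≥ 1, every j ≥ 0 and every word u ∈ {0,1}^k, P(W_{j+1}…W_{j+k} = u) = 2^{−k}. -/

import Mathlib

open MeasureTheory ProbabilityTheory Filter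

/-- The event that the block `X_{j+1} … X_{j+|u|}` of the binary process `X` equals the
word `u` (bits: `false = 0`, `true = 1`; the process is `X 1, X 2, …`). -/
def blockEvent {Ω : Type*} (X : ℕ → Ω → Bool) (j : ℕ) (u : List Bool) : Set Ω :=
  {ω | ∀ i, i < u.length → X (j + 1 + i) ω = u.getD i false}

/-- A binary process `(X_n)_{n≥1}` is `k`-order two-faced if for every `j ≥ 0` and every
word `u ∈ {0,1}^k`, `P(X_{j+1}…X_{j+k} = u) = 2^{-k}`. -/
def IsTwoFaced {Ω : Type*} [MeasurableSpace Ω] (P : Measure Ω)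
    (X : ℕ → Ω → Bool) (k : ℕ) : Prop :=
  ∀ (j : ℕ) (u : List Bool), u.length = k →
    (P (blockEvent X j u)).toReal = ((2 : ℝ) ^ k)⁻¹

/-- A binary process `(X_n)_{n≥1}` is asymptotically `k`-order two-faced if for every
word `u ∈ {0,1}^k`, `lim_{j→∞} P(X_{j+1}…X_{j+k} = u) = 2^{-k}`. -/
def IsAsympTwoFaced {Ω : Type*} [MeasurableSpace Ω] (P : Measure Ω)
    (X : ℕ → Ω → Bool) (k : ℕ) : Prop :=
  ∀ u : List Bool, u.length = k →
    Tendsto (fun j : ℕ => (P (blockEvent X j u)).toReal) atTop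
      (nhds (((2 : ℝ) ^ k)⁻¹))


/-!
Cut the window `W_{j+1} … W_{j+k}` at the last threshold `n_m` below its right end. Every
letter left of the cut is a function of `X^1, …, X^m`; every letter right of it is
`Y_i ⊕ X^{m+1}_i` with `Y_i = X^1_i ⊕ ⋯ ⊕ X^m_i`. The right part, of length `r ≤ n_{m+1}`, is a
uniform block of `X^{m+1}` independent of `X^1, …, X^m`, and adding an independent uniform
vector to anything measurable with respect to the past gives a uniform vector independent of
the past. So the probability of the window is `P(left part) · 2^{-r}`, and strong induction on
`k` finishes.
-/

theorem measure_eq_sum_preimage_singleton_inter {Ω β : Type*} [MeasurableSpace Ω]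
    {μ : Measure Ω} [Fintype β] [MeasurableSpace β] [MeasurableSingletonClass β] {f : Ω → β}
    (hf : Measurable f) (s : Set Ω) : μ s = ∑ b, μ (f ⁻¹' {b} ∩ s) := by
  simp_rw [← Measure.restrict_apply (hf (measurableSet_singleton _))]
  rw [sum_measure_preimage_singleton _ fun b _ => hf (measurableSet_singleton b)]
  simp

theorem measure_inter_preimage_add_eq_mul {Ω γ : Type*} {m₁ m₂ : MeasurableSpace Ω}
    [mΩ : MeasurableSpace Ω] {μ : Measure Ω} [AddGroup γ] [Fintype γ] [MeasurableSpace γ]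
    [MeasurableSingletonClass γ] (h₁ : m₁ ≤ mΩ) (hind : Indep m₁ m₂ μ) {A : Set Ω}
    (hA : MeasurableSet[m₁] A) {Y Z : Ω → γ} (hY : Measurable[m₁] Y) (hZ : Measurable[m₂] Z)
    {p : ENNReal} (hunif : ∀ c, μ (Z ⁻¹' {c}) = p) (w : γ) :
    μ (A ∩ (Y + Z) ⁻¹' {w}) = μ A * p := by
  have hfiber : ∀ y,
      Y ⁻¹' {y} ∩ (A ∩ (Y + Z) ⁻¹' {w}) = (A ∩ Y ⁻¹' {y}) ∩ Z ⁻¹' {-y + w} := by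
    intro y
    ext ω
    simp only [Set.mem_inter_iff, Set.mem_preimage, Set.mem_singleton_iff, Pi.add_apply,
      eq_neg_add_iff_add_eq]
    constructor
    · rintro ⟨rfl, hA, hw⟩
      exact ⟨⟨hA, rfl⟩, hw⟩
    · rintro ⟨⟨hA, rfl⟩, hw⟩
      exact ⟨rfl, hA, hw⟩
  have hY' : Measurable Y := hY.mono h₁ le_rfl
  rw [measure_eq_sum_preimage_singleton_inter hY', measure_eq_sum_preimage_singleton_inter hY' A,
    Finset.sum_mul]
  refine Finset.sum_congr rfl fun y _ => ?_
  rw [hfiber, (Indep_iff _ _ _).mp hind _ _ (hA.inter (hY (measurableSet_singleton y)))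
    (hZ (measurableSet_singleton _)), hunif, Set.inter_comm]

section Blocks

variable {Ω : Type*} {X : ℕ → Ω → Bool}

def block (X : ℕ → Ω → Bool) (j k : ℕ) (ω : Ω) : Fin k → Bool :=
  fun i => X (j + 1 + i) ω

theorem blockEvent_ofFn (j : ℕ) {k : ℕ} (v : Fin k → Bool) :
    blockEvent X j (List.ofFn v) = block X j k ⁻¹' {v} := by
  ext ω
  simp only [blockEvent, List.length_ofFn, Set.mem_ofPred_eq, Set.mem_preimage,
    Set.mem_singleton_iff, funext_iff, Fin.forall_iff, block]
  refine forall₂_congr fun i hi => ?_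
  simp [List.getD, hi]

theorem measurable_block {m : MeasurableSpace Ω} {j k : ℕ}
    (h : ∀ i < k, Measurable[m] (X (j + 1 + i))) : Measurable[m] (block X j k) :=
  measurable_pi_lambda _ fun i => h i i.2

theorem block_preimage_append {j s r : ℕ} (v : Fin s → Bool) (w : Fin r → Bool) :
    block X j (s + r) ⁻¹' {Fin.append v w} =
      block X j s ⁻¹' {v} ∩ block X (j + s) r ⁻¹' {w} := by
  have hsplit : ∀ ω,
      block X j (s + r) ω = Fin.append (block X j s ω) (block X (j + s) r ω) := by
    intro ω
    funext i
    refine Fin.addCases (fun i => ?_) (fun i => ?_) i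
    · simp [block]
    · simp [block, Nat.add_assoc, Nat.add_left_comm]
  ext ω
  simp only [Set.mem_preimage, Set.mem_singleton_iff, Set.mem_inter_iff, hsplit]
  constructor
  · intro h
    exact ⟨funext fun i => by simpa using congrFun h (Fin.castAdd r i),
      funext fun i => by simpa using congrFun h (Fin.natAdd s i)⟩
  · rintro ⟨rfl, rfl⟩
    rfl

section Probability

variable [MeasurableSpace Ω] {P : Measure Ω}

theorem isTwoFaced_iff [IsFiniteMeasure P] {k : ℕ} :
    IsTwoFaced P X k ↔ ∀ j (v : Fin k → Bool), P (block X j k ⁻¹' {v}) = (2 ^ k)⁻¹ := by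
  have hreal : ∀ s : Set Ω, (P s).toReal = ((2 : ℝ) ^ k)⁻¹ ↔ P s = (2 ^ k)⁻¹ := fun s => by
    rw [← ENNReal.toReal_eq_toReal_iff' (measure_ne_top P s) (by simp)]
    simp
  constructor
  · intro h j v
    rw [← hreal, ← blockEvent_ofFn]
    exact h j _ List.length_ofFn
  · rintro h j u rfl
    have hu := blockEvent_ofFn (X := X) j (fun i : Fin u.length => u[(i : ℕ)])
    rw [List.ofFn_getElem] at hu
    rw [hreal, hu]
    exact h j _

theorem IsTwoFaced.of_add [IsFiniteMeasure P] (hX : ∀ q, Measurable (X q)) {k d : ℕ}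
    (h : IsTwoFaced P X (k + d)) : IsTwoFaced P X k := by
  rw [isTwoFaced_iff] at h ⊢
  intro j v
  rw [measure_eq_sum_preimage_singleton_inter (measurable_block (j := j + k) (k := d)
    fun i _ => hX _)]
  simp_rw [Set.inter_comm, ← block_preimage_append, h]
  rw [Finset.sum_const, Finset.card_univ, Fintype.card_fun, Fintype.card_fin, Fintype.card_bool,
    nsmul_eq_mul, Nat.cast_pow, Nat.cast_ofNat, pow_add, ENNReal.mul_inv (by simp) (by simp),
    mul_left_comm, ENNReal.mul_inv_cancel (by simp) (by simp), mul_one]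

theorem IsTwoFaced.of_le [IsFiniteMeasure P] (hX : ∀ q, Measurable (X q)) {k K : ℕ}
    (hkK : k ≤ K) (h : IsTwoFaced P X K) : IsTwoFaced P X k := by
  obtain ⟨d, rfl⟩ := Nat.exists_eq_add_of_le hkK
  exact h.of_add hX

end Probability

end Blocks

theorem measure_block_append_eq_mul {Ω : Type*} {m₁ m₂ : MeasurableSpace Ω}
    [mΩ : MeasurableSpace Ω] {P : Measure Ω} (h₁ : m₁ ≤ mΩ) (hind : Indep m₁ m₂ P)
    {W Y Z : ℕ → Ω → Bool} {j s r : ℕ} (hW : ∀ i < s, Measurable[m₁] (W (j + 1 + i)))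
    (hY : ∀ i < r, Measurable[m₁] (Y (j + s + 1 + i)))
    (hZ : ∀ i < r, Measurable[m₂] (Z (j + s + 1 + i)))
    (hunif : ∀ c, P (block Z (j + s) r ⁻¹' {c}) = (2 ^ r)⁻¹)
    (hWYZ : ∀ i < r, ∀ ω,
      W (j + s + 1 + i) ω = xor (Y (j + s + 1 + i) ω) (Z (j + s + 1 + i) ω))
    (v : Fin s → Bool) (w : Fin r → Bool) :
    P (block W j (s + r) ⁻¹' {Fin.append v w}) = P (block W j s ⁻¹' {v}) * (2 ^ r)⁻¹ := by
  have hsum : block W (j + s) r = block Y (j + s) r + block Z (j + s) r :=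
    funext fun ω => funext fun i => hWYZ i i.2 ω
  rw [block_preimage_append, hsum]
  exact measure_inter_preimage_add_eq_mul h₁ hind
    (measurable_block hW (measurableSet_singleton v)) (measurable_block hY)
    (measurable_block hZ) hunif w

theorem StrictMono.exists_lt_le_succ {n : ℕ → ℕ} (hmono : StrictMono n) (hn0 : n 0 = 0)
    {q : ℕ} (hq : 0 < q) : ∃ m, n m < q ∧ q ≤ n (m + 1) := by
  have hex : ∃ t, q ≤ n t := ⟨q, hmono.id_le q⟩
  obtain ⟨m, hm⟩ : ∃ m, Nat.find hex = m + 1 := by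
    refine Nat.exists_eq_succ_of_ne_zero fun h => ?_
    have := Nat.find_spec hex
    rw [h, hn0] at this
    omega
  exact ⟨m, lt_of_not_ge (Nat.find_min hex (by omega)), hm ▸ Nat.find_spec hex⟩

section Processes

variable {Ω : Type*} {X : ℕ → ℕ → Ω → Bool}

abbrev processSigma (X : ℕ → ℕ → Ω → Bool) (S : Set ℕ) : MeasurableSpace Ω :=
  ⨆ i ∈ S, MeasurableSpace.comap (fun ω q => X i q ω) MeasurableSpace.pi

theorem processSigma_le [MeasurableSpace Ω] (hX : ∀ i q, Measurable (X i q)) (S : Set ℕ) :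
    processSigma X S ≤ ‹MeasurableSpace Ω› :=
  iSup₂_le fun i _ => (measurable_pi_lambda _ (hX i)).comap_le

theorem indep_processSigma [MeasurableSpace Ω] {P : Measure Ω} (hX : ∀ i q, Measurable (X i q))
    (hindep : iIndepFun (fun i ω (q : ℕ) => X i q ω) P) {S T : Set ℕ} (hST : Disjoint S T) :
    Indep (processSigma X S) (processSigma X T) P :=
  indep_iSup_of_disjoint (fun i => (measurable_pi_lambda _ (hX i)).comap_le)
    ((iIndepFun_iff_iIndep _ _ _).mp hindep) hST

theorem measurable_processSigma {S : Set ℕ} {l : ℕ} (hl : l ∈ S) (q : ℕ) :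
    Measurable[processSigma X S] (X l q) :=
  (measurable_pi_apply q).comp ((comap_measurable _).mono
    (le_iSup₂ (f := fun i (_ : i ∈ S) =>
      MeasurableSpace.comap (fun ω q => X i q ω) MeasurableSpace.pi) l hl) le_rfl)

def xorUpTo (X : ℕ → ℕ → Ω → Bool) (m q : ℕ) (ω : Ω) : Bool :=
  (List.range m).foldl (fun b l => xor b (X l q ω)) false

theorem xorUpTo_succ (m q : ℕ) (ω : Ω) :
    xorUpTo X (m + 1) q ω = xor (xorUpTo X m q ω) (X m q ω) := by
  simp [xorUpTo, List.range_succ]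

theorem measurable_xorUpTo {S : Set ℕ} {m : ℕ} (hS : Set.Iio m ⊆ S) (q : ℕ) :
    Measurable[processSigma X S] (xorUpTo X m q) := by
  induction m with
  | zero => exact measurable_const
  | succ m ih =>
    have hxor : Measurable (fun p : Bool × Bool => xor p.1 p.2) := .of_discrete
    simp_rw [funext (xorUpTo_succ m q)]
    exact hxor.comp ((ih fun l hl => hS (Nat.lt_succ_of_lt hl)).prodMk
      (measurable_processSigma (hS (Nat.lt_succ_self m)) q))

theorem measurable_processSigma_of_eq_xorUpTo {n : ℕ → ℕ} (hn0 : n 0 = 0)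
    (hmono : StrictMono n) {W : ℕ → Ω → Bool}
    (hW : ∀ m i, n m < i → i ≤ n (m + 1) → W i = xorUpTo X (m + 1) i) {M q : ℕ} (hq : 0 < q)
    (hqM : q ≤ n M) : Measurable[processSigma X (Set.Iio M)] (W q) := by
  obtain ⟨m, hm, hm'⟩ := hmono.exists_lt_le_succ hn0 hq
  have hmM : m + 1 ≤ M := hmono.lt_iff_lt.mp (hm.trans_le hqM)
  rw [hW m q hm hm']
  exact measurable_xorUpTo (fun l hl => lt_of_lt_of_le hl hmM) q

end Processes

-- `X i` stands for the process `X^{i+1}` of the informal statement.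
/-- let `0 = n_0 < n_1 < n_2 < ⋯` and let `X^1, X^2, …` be mutually
independent binary processes (here `X i` is the process `X^{i+1}`, which is
`n_{i+1}`-order two-faced). If `W_i = X^1_i ⊕ ⋯ ⊕ X^m_i` whenever `n_{m-1} < i ≤ n_m`,
then `W` is twice two-faced: `k`-order two-faced for every `k ≥ 1`. -/
theorem xor_series_twice_two_faced {Ω : Type*} [MeasurableSpace Ω]
    (P : Measure Ω) [IsProbabilityMeasure P]
    (n : ℕ → ℕ) (hn0 : n 0 = 0) (hmono : StrictMono n)
    (X : ℕ → ℕ → Ω → Bool) (hX : ∀ i m, Measurable (X i m))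
    (hindep : iIndepFun (m := fun _ : ℕ => (inferInstance : MeasurableSpace (ℕ → Bool)))
      (fun i ω (m : ℕ) => X i m ω) P)
    (htf : ∀ i : ℕ, IsTwoFaced P (X i) (n (i + 1)))
    (W : ℕ → Ω → Bool)
    (hW : ∀ (m i : ℕ), n m < i → i ≤ n (m + 1) → ∀ ω,
      W i ω = (List.range (m + 1)).foldl (fun b j => xor b (X j i ω)) false) :
    ∀ k, 1 ≤ k → IsTwoFaced P W k := by
  have hW' : ∀ m i, n m < i → i ≤ n (m + 1) → W i = xorUpTo X (m + 1) i :=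
    fun m i h h' => funext (hW m i h h')
  suffices ∀ k, IsTwoFaced P W k from fun k _ => this k
  intro k
  induction k using Nat.strong_induction_on with
  | _ k ih =>
  rw [isTwoFaced_iff]
  intro j v
  rcases k.eq_zero_or_pos with rfl | hk
  · have huniv : block W j 0 ⁻¹' {v} = Set.univ :=
      Set.eq_univ_of_forall fun ω => Subsingleton.elim _ _
    simp [huniv]
  obtain ⟨m, hm, hm'⟩ := hmono.exists_lt_le_succ hn0 (show 0 < j + k by omega)
  obtain ⟨s, r, rfl, hs⟩ : ∃ s r, k = s + r ∧ j + s = max j (n m) :=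
    ⟨n m - j, k - (n m - j), by omega, by omega⟩
  have hind : Indep (processSigma X (Set.Iio m)) (processSigma X {m}) P :=
    indep_processSigma hX hindep (Set.disjoint_singleton_right.mpr (lt_irrefl m))
  have hunif := isTwoFaced_iff.mp ((htf m).of_le (hX m) (by omega : r ≤ n (m + 1))) (j + s)
  have hWYZ : ∀ i < r, ∀ ω, W (j + s + 1 + i) ω =
      xor (xorUpTo X m (j + s + 1 + i) ω) (X m (j + s + 1 + i) ω) :=
    fun i _ ω => (congrFun (hW' m _ (by omega) (by omega)) ω).trans (xorUpTo_succ m _ ω)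
  rw [← Fin.append_castAdd_natAdd (f := v),
    measure_block_append_eq_mul (processSigma_le hX _) hind
      (fun i _ => measurable_processSigma_of_eq_xorUpTo hn0 hmono hW' (by omega) (by omega))
      (fun i _ => measurable_xorUpTo subset_rfl _)
      (fun i _ => measurable_processSigma (Set.mem_singleton m) _) hunif hWYZ,
    isTwoFaced_iff.mp (ih s (by omega)) j, pow_add, ENNReal.mul_inv (by simp) (by simp)]
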